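/- Let γ and γ' be geodesic rays in DL_2(q) emanating from the origin o which both descend to height exactly −h ≤ 0 in tree T_i before turning. If the projections γ^(i) and γ'^(i) to T_i are equal, then γ restricted to [2h, ∞) equals γ' restricted to [2h, ∞); in particular γ and γ' are asymptotic. -/

import Mathlib

/-- A vertex of the (q+1)-regular tree with a distinguished end, in the
horocyclic model: a height `k ∈ ℤ` together with a finitely supported
labelling of the levels strictly below `k`. -/
structure TreeVert (q : ℕ) where
  height : ℤ
  labels : ℤ → ℕ
  labels_lt : ∀ n, labels n = 0 ∨ labels n < q
  supp_below : ∀ n, height ≤ n → labels n = 0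
  fin_supp : (Function.support labels).Finite

namespace DL

variable {q d : ℕ}

/-- `v` is a child of `u` (one step further from the distinguished end). -/
abbrev treeAdjUp (u v : TreeVert q) : Prop :=
  v.height = u.height + 1 ∧ ∀ n, n ≠ u.height → v.labels n = u.labels n

/-- The (q+1)-regular tree. -/
def TreeGraph (q : ℕ) : SimpleGraph (TreeVert q) where
  Adj u v := treeAdjUp u v ∨ treeAdjUp v u
  symm := ⟨fun u v h => Or.symm h⟩
  loopless := by
    constructor
    intro u h
    rcases h with ⟨h1, _⟩ | ⟨h1, _⟩ <;> omega

/-- The base vertex of the tree. -/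
def treeOrigin (q : ℕ) : TreeVert q :=
  ⟨0, fun _ => 0, fun _ => Or.inl rfl, fun _ _ => rfl, by simp⟩

/-- Vertices of the Diestel–Leader graph `DL_d(q)`:
`d`-tuples of tree vertices whose heights sum to zero. -/
def DLVert (d q : ℕ) : Type :=
  {x : Fin d → TreeVert q // (∑ i, (x i).height) = 0}

/-- The Diestel–Leader graph `DL_d(q)`: an edge ascends in one tree and
descends in another, all other coordinates being fixed. -/
def DLGraph (d q : ℕ) : SimpleGraph (DLVert d q) where
  Adj v w := ∃ i j : Fin d, i ≠ j ∧ treeAdjUp (v.1 i) (w.1 i) ∧ treeAdjUp (w.1 j) (v.1 j) ∧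
      ∀ k : Fin d, k ≠ i → k ≠ j → v.1 k = w.1 k
  symm := by
    constructor
    rintro v w ⟨i, j, hij, h1, h2, h3⟩
    exact ⟨j, i, hij.symm, h2, h1, fun k hk1 hk2 => (h3 k hk2 hk1).symm⟩
  loopless := by
    constructor
    rintro v ⟨i, j, hij, ⟨h1, _⟩, _⟩
    omega

/-- The base point of `DL_d(q)`. -/
def origin (d q : ℕ) : DLVert d q :=
  ⟨fun _ => treeOrigin q, by simp [treeOrigin]⟩

/-- A geodesic ray in `DL_d(q)` : an isometric embedding of `ℕ`. -/
def IsGeodesicRay (γ : ℕ → DLVert d q) : Prop :=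
  ∀ m n : ℕ, m ≤ n → (DLGraph d q).dist (γ m) (γ n) = n - m

/-- Two rays are asymptotic when they stay at uniformly bounded distance. -/
def Asymptotic (γ γ' : ℕ → DLVert d q) : Prop :=
  ∃ C : ℕ, ∀ n : ℕ, (DLGraph d q).dist (γ n) (γ' n) ≤ C

instance : TopologicalSpace (DLVert d q) := ⊥

/-- Geodesic rays emanating from the origin, with the topology of uniform
convergence on compact sets (= pointwise convergence, the vertex set being
discrete). -/
def RaySpace (d q : ℕ) : Type :=
  {γ : ℕ → DLVert d q // IsGeodesicRay γ ∧ γ 0 = origin d q}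

instance : TopologicalSpace (RaySpace d q) := by
  unfold RaySpace; infer_instance

lemma reachable_origin (γ : RaySpace d q) (n : ℕ) :
    (DLGraph d q).Reachable (origin d q) (γ.1 n) := by
  cases n with
  | zero => rw [γ.2.2]
  | succ n =>
    have h := γ.2.1 0 (n + 1) (Nat.zero_le _)
    have hne : (DLGraph d q).dist (γ.1 0) (γ.1 (n + 1)) ≠ 0 := by
      rw [h]; omega
    have := SimpleGraph.Reachable.of_dist_ne_zero hne
    rwa [γ.2.2] at this

/-- Asymptoticity as an equivalence relation on geodesic rays from the origin. -/
def asympSetoid (d q : ℕ) : Setoid (RaySpace d q) where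
  r γ γ' := Asymptotic γ.1 γ'.1
  iseqv := by
    constructor
    · intro γ
      exact ⟨0, fun n => by simp [SimpleGraph.dist_self]⟩
    · rintro γ γ' ⟨C, hC⟩
      exact ⟨C, fun n => by rw [SimpleGraph.dist_comm]; exact hC n⟩
    · rintro a b c ⟨C1, h1⟩ ⟨C2, h2⟩
      refine ⟨C1 + C2, fun n => ?_⟩
      have hab : (DLGraph d q).Reachable (a.1 n) (b.1 n) :=
        (reachable_origin a n).symm.trans (reachable_origin b n)
      have hbc : (DLGraph d q).Reachable (b.1 n) (c.1 n) :=
        (reachable_origin b n).symm.trans (reachable_origin c n)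
      obtain ⟨p, hp⟩ := hab.exists_walk_length_eq_dist
      obtain ⟨p', hp'⟩ := hbc.exists_walk_length_eq_dist
      calc (DLGraph d q).dist (a.1 n) (c.1 n) ≤ (p.append p').length :=
            SimpleGraph.dist_le _
        _ = (DLGraph d q).dist (a.1 n) (b.1 n) + (DLGraph d q).dist (b.1 n) (c.1 n) := by
            rw [SimpleGraph.Walk.length_append, hp, hp']
        _ ≤ C1 + C2 := Nat.add_le_add (h1 n) (h2 n)

/-- The visual boundary of `DL_d(q)`: asymptotic classes of geodesic rays
from the origin, with the quotient topology. -/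
def Boundary (d q : ℕ) : Type := Quotient (asympSetoid d q)

instance : TopologicalSpace (Boundary d q) := by
  unfold Boundary; infer_instance

/-- A ray in `DL_2(q)` descends for exactly `n` steps in tree `i`
(bottoming out at height `-n`), then ascends forever in tree `i`.
For `n = 0` this says the ray ascends forever in tree `i` with no turn. -/
def DescendsExactly (i : Fin 2) (n : ℕ) (γ : ℕ → DLVert 2 q) : Prop :=
  (∀ t : ℕ, t ≤ n → ((γ t).1 i).height = -(t : ℤ)) ∧
  (∀ t : ℕ, n ≤ t → ((γ t).1 i).height = (t : ℤ) - 2 * n)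

/-- The subset `C_n^i` of the boundary: classes of rays bottoming out in
tree `i` after descending exactly `n` edges. -/
def Cset (q : ℕ) (i : Fin 2) (n : ℕ) : Set (Boundary 2 q) :=
  {x | ∃ γ : RaySpace 2 q, Quotient.mk (asympSetoid 2 q) γ = x ∧ DescendsExactly i n γ.1}

/-- Projection of a path in `DL_d(q)` to the `i`-th tree. -/
def proj (i : Fin d) (γ : ℕ → DLVert d q) : ℕ → TreeVert q := fun n => (γ n).1 i

/-- Two (lazy) paths in the tree converge to the same end: both eventually
leave every ball, and they come within a uniformly bounded distance of each
other at arbitrarily late times. -/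
def SameEnd (a b : ℕ → TreeVert q) : Prop :=
  (∀ R : ℕ, ∃ N : ℕ, ∀ n, N ≤ n → R ≤ (TreeGraph q).dist (a 0) (a n)) ∧
  (∀ R : ℕ, ∃ N : ℕ, ∀ n, N ≤ n → R ≤ (TreeGraph q).dist (b 0) (b n)) ∧
  (∃ C : ℕ, ∀ N : ℕ, ∃ m n, N ≤ m ∧ N ≤ n ∧ (TreeGraph q).dist (a m) (b n) ≤ C)

/-- The step from `p m` to `p (m+1)` descends in tree `i`. -/
def StepDown (i : Fin d) (p : ℕ → DLVert d q) (m : ℕ) : Prop :=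
  treeAdjUp ((p (m + 1)).1 i) ((p m).1 i)

/-- The step from `p m` to `p (m+1)` ascends in tree `i`. -/
def StepUp (i : Fin d) (p : ℕ → DLVert d q) (m : ℕ) : Prop :=
  treeAdjUp ((p m).1 i) ((p (m + 1)).1 i)

/-- A turn in tree `i`: a subpath beginning with a descent in `T_i` at step `t`,
ending with an ascent in `T_i` at step `s`, with no intervening step
involving `T_i`. -/
def IsTurn (i : Fin d) (p : ℕ → DLVert d q) (t s : ℕ) : Prop :=
  t < s ∧ StepDown i p t ∧ StepUp i p s ∧
    ∀ m, t < m → m < s → (p (m + 1)).1 i = (p m).1 i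


/-!
Let `j` be the other tree. Up to time `2h` the height in `T_i` is `≤ 0`, so the ray stays in the
half `h_j ≥ 0` of `T_j`, where an ascent only rewrites labels at nonnegative levels and a descent
never creates a label; hence at time `2h`, when `h_j = 0` again, both rays sit at the origin of
`T_j`. From then on both ascend in `T_i`, i.e. move to the parent in `T_j`, which is unique; as the
`T_i`-coordinates agree by hypothesis, the rays coincide from time `2h` on.
-/

lemma treeVert_ext {u v : TreeVert q} (h_height : u.height = v.height)
    (h_labels : u.labels = v.labels) : u = v := by
  cases u; cases v; simp_all

lemma eq_treeOrigin {v : TreeVert q} (h_height : v.height = 0)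
    (h_labels : ∀ n < 0, v.labels n = 0) : v = treeOrigin q := by
  refine treeVert_ext h_height (funext fun n => ?_)
  rcases lt_or_ge n 0 with hn | hn
  · exact h_labels n hn
  · exact v.supp_below n (by omega)

lemma treeAdjUp.left_unique {u u' v : TreeVert q} (h : treeAdjUp u v) (h' : treeAdjUp u' v) :
    u = u' := by
  have hh : u.height = u'.height := by omega
  refine treeVert_ext hh (funext fun n => ?_)
  by_cases hn : n = u.height
  · rw [u.supp_below n hn.ge, u'.supp_below n (hh ▸ hn.ge)]
  · rw [← h.2 n hn, h'.2 n (hh ▸ hn)]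

lemma treeAdjUp.labels_left_eq_zero {u v : TreeVert q} (h : treeAdjUp u v) {n : ℤ}
    (hn : v.labels n = 0) : u.labels n = 0 := by
  by_cases hnu : n = u.height
  · exact u.supp_below n hnu.ge
  · rwa [h.2 n hnu] at hn

lemma IsGeodesicRay.adj {γ : ℕ → DLVert d q} (hγ : IsGeodesicRay γ) (t : ℕ) :
    (DLGraph d q).Adj (γ t) (γ (t + 1)) :=
  SimpleGraph.dist_eq_one_iff_adj.1 <| by simpa using hγ t (t + 1) t.le_succ

lemma IsGeodesicRay.reachable {γ : ℕ → DLVert d q} (hγ : IsGeodesicRay γ) (m n : ℕ) :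
    (DLGraph d q).Reachable (γ m) (γ n) := by
  wlog hmn : m ≤ n generalizing m n
  · exact (this n m (by omega)).symm
  rcases hmn.eq_or_lt with rfl | hlt
  · rfl
  · exact .of_dist_ne_zero (by rw [hγ m n hmn]; omega)

/-- Geodesic rays that agree from time `T` on stay within distance `2T`. -/
lemma IsGeodesicRay.asymptotic_of_eventuallyEq {γ γ' : ℕ → DLVert d q}
    (hγ : IsGeodesicRay γ) (hγ' : IsGeodesicRay γ') {T : ℕ}
    (heq : ∀ t, T ≤ t → γ t = γ' t) : Asymptotic γ γ' := by
  refine ⟨2 * T, fun n => ?_⟩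
  rcases le_or_gt T n with hn | hn
  · simp [heq n hn]
  · calc (DLGraph d q).dist (γ n) (γ' n)
        ≤ (DLGraph d q).dist (γ n) (γ T) + (DLGraph d q).dist (γ T) (γ' n) :=
          (heq T le_rfl ▸ hγ'.reachable T n).dist_triangle_right _
      _ = (T - n) + (T - n) := by
          rw [hγ n T hn.le, heq T le_rfl, SimpleGraph.dist_comm, hγ' n T hn.le]
      _ ≤ 2 * T := by omega

section TwoTrees

variable {i j : Fin 2}

lemma DLVert.height_eq_neg {v : DLVert 2 q} (hji : j ≠ i) :
    (v.1 j).height = -(v.1 i).height := by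
  have hsum := v.2
  rw [Fin.sum_univ_two] at hsum
  fin_cases i <;> fin_cases j <;> simp_all <;> omega

lemma DLVert.ext_of_ne {v w : DLVert 2 q} (hji : j ≠ i) (hi : v.1 i = w.1 i)
    (hj : v.1 j = w.1 j) : v = w := by
  refine Subtype.ext (funext fun k => ?_)
  fin_cases i <;> fin_cases j <;> fin_cases k <;> simp_all

lemma DLGraph.adj_two {v w : DLVert 2 q} (hji : j ≠ i) (hadj : (DLGraph 2 q).Adj v w) :
    (treeAdjUp (v.1 i) (w.1 i) ∧ treeAdjUp (w.1 j) (v.1 j)) ∨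
    (treeAdjUp (v.1 j) (w.1 j) ∧ treeAdjUp (w.1 i) (v.1 i)) := by
  obtain ⟨a, b, hab, hup, hdown, -⟩ := hadj
  fin_cases i <;> fin_cases j <;> fin_cases a <;> fin_cases b <;> simp_all <;> tauto

lemma DLGraph.labels_neg_eq_zero_of_adj {v w : DLVert 2 q} (hji : j ≠ i)
    (hadj : (DLGraph 2 q).Adj v w) (hv : 0 ≤ (v.1 j).height)
    (hlabels : ∀ n < 0, (v.1 j).labels n = 0) : ∀ n < 0, (w.1 j).labels n = 0 := by
  intro n hn
  rcases DLGraph.adj_two hji hadj with ⟨-, hdown⟩ | ⟨hup, -⟩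
  · exact hdown.labels_left_eq_zero (hlabels n hn)
  · rw [hup.2 n (by omega)]
    exact hlabels n hn

lemma DescendsExactly.height_nonpos {γ : ℕ → DLVert 2 q} {h t : ℕ}
    (hdesc : DescendsExactly i h γ) (ht : t ≤ 2 * h) : ((γ t).1 i).height ≤ 0 := by
  rcases le_total t h with hth | hht
  · rw [hdesc.1 t hth]; omega
  · rw [hdesc.2 t hht]; omega

lemma DescendsExactly.stepDown {γ : ℕ → DLVert 2 q} {h t : ℕ} (hji : j ≠ i)
    (hγ : IsGeodesicRay γ) (hdesc : DescendsExactly i h γ) (ht : h ≤ t) : StepDown j γ t := by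
  rcases DLGraph.adj_two hji (hγ.adj t) with ⟨-, hdown⟩ | ⟨-, hup⟩
  · exact hdown
  · have := hup.1
    have := hdesc.2 t ht
    have := hdesc.2 (t + 1) (by omega)
    push_cast at *
    omega

lemma DescendsExactly.eq_treeOrigin_at_two_mul {γ : ℕ → DLVert 2 q} {h : ℕ} (hji : j ≠ i)
    (hγ : IsGeodesicRay γ) (hγ0 : γ 0 = origin 2 q) (hdesc : DescendsExactly i h γ) :
    (γ (2 * h)).1 j = treeOrigin q := by
  have hlabels : ∀ t ≤ 2 * h, ∀ n < 0, ((γ t).1 j).labels n = 0 := by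
    intro t
    induction t with
    | zero => intro _ n _; rw [hγ0]; rfl
    | succ t ih =>
      intro ht
      refine DLGraph.labels_neg_eq_zero_of_adj hji (hγ.adj t) ?_ (ih (by omega))
      rw [DLVert.height_eq_neg hji]
      linarith [hdesc.height_nonpos (t := t) (by omega)]
  refine eq_treeOrigin ?_ (hlabels (2 * h) le_rfl)
  rw [DLVert.height_eq_neg hji, hdesc.2 (2 * h) (by omega)]
  push_cast
  ring

end TwoTrees

theorem merge_of_same_projection_general {q : ℕ} (i : Fin 2) (h : ℕ)
    (γ γ' : ℕ → DLVert 2 q)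
    (hγ : IsGeodesicRay γ) (hγ' : IsGeodesicRay γ')
    (hγ0 : γ 0 = origin 2 q) (hγ'0 : γ' 0 = origin 2 q)
    (hdesc : DescendsExactly i h γ) (hdesc' : DescendsExactly i h γ')
    (hproj : ∀ t : ℕ, (γ t).1 i = (γ' t).1 i) :
    (∀ t : ℕ, 2 * h ≤ t → γ t = γ' t) ∧ Asymptotic γ γ' := by
  obtain ⟨j, hji⟩ := exists_ne i
  have hmerge : ∀ t, 2 * h ≤ t → γ t = γ' t := by
    intro t ht
    induction t, ht using Nat.le_induction with
    | base =>
      exact DLVert.ext_of_ne hji (hproj _) <| by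
        rw [hdesc.eq_treeOrigin_at_two_mul hji hγ hγ0,
          hdesc'.eq_treeOrigin_at_two_mul hji hγ' hγ'0]
    | succ t ht ih =>
      refine DLVert.ext_of_ne hji (hproj _) ?_
      have hstep := hdesc.stepDown hji hγ (t := t) (by omega)
      rw [StepDown, ih] at hstep
      exact hstep.left_unique (hdesc'.stepDown hji hγ' (by omega))
  exact ⟨hmerge, hγ.asymptotic_of_eventuallyEq hγ' hmerge⟩

/-- two geodesic rays from the origin of `DL_2(q)` that bottom out
at height `-h` in tree `i` and have equal projections to tree `i` coincide
from time `2h` on; in particular they are asymptotic. -/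
theorem merge_of_same_projection {q : ℕ} (hq : 2 ≤ q) (i : Fin 2) (h : ℕ)
    (γ γ' : ℕ → DLVert 2 q)
    (hγ : IsGeodesicRay γ) (hγ' : IsGeodesicRay γ')
    (hγ0 : γ 0 = origin 2 q) (hγ'0 : γ' 0 = origin 2 q)
    (hdesc : DescendsExactly i h γ) (hdesc' : DescendsExactly i h γ')
    (hproj : ∀ t : ℕ, (γ t).1 i = (γ' t).1 i) :
    (∀ t : ℕ, 2 * h ≤ t → γ t = γ' t) ∧ Asymptotic γ γ' :=
  merge_of_same_projection_general i h γ γ' hγ hγ' hγ0 hγ'0 hdesc hdesc' hproj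

end DL
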